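/- arXiv:math/0010140 — 2 statements merged into one kernel-verified Lean document; each statement's English description precedes it below -/
import Mathlib

section
/- (Duality; τ-invariance in Theorem 4.1.) For every admissible sequence s = (k₁,…,k_l), ζ(s) = ζ(τ(s)), where τ(s) is the dual sequence of s. -/
/-- The multiple zeta value `ζ(k₁,…,k_l) = ∑_{n₁>n₂>⋯>n_l≥1} 1/(n₁^{k₁} ⋯ n_l^{k_l})`. -/
noncomputable def mzv (k : List ℕ) : ℝ :=
  ∑' n : Fin k.length → ℕ,
    if (∀ i j : Fin k.length, i < j → n j < n i) ∧ (∀ i, 1 ≤ n i) then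
      ∏ i : Fin k.length, ((n i : ℝ) ^ k.get i)⁻¹
    else 0

/-- Partial sums Σ(s) = (k₁, k₁+k₂, …, k₁+⋯+k_l). -/
def partialSums (k : List ℕ) : List ℕ :=
  (List.range k.length).map fun i => (k.take (i + 1)).sum

/-- Inverse of `partialSums`: the sequence of successive differences. -/
def unPartial (a : List ℕ) : List ℕ :=
  List.zipWith (· - ·) a (0 :: a)

/-- The dual sequence τ(s) = Σ⁻¹(C_n(R_n(Σ(s)))) of an admissible sequence `s` of weight `n`,
where `R_n(a₁,…,a_i) = (n+1-a_i,…,n+1-a₁)` and `C_n` takes the complement in `{1,…,n}`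
in increasing order. -/
def dualSeq (k : List ℕ) : List ℕ :=
  let n := k.sum
  let r := (partialSums k).reverse.map fun a => n + 1 - a
  let c := ((List.range n).map (· + 1)).filter fun m => m ∉ r
  unPartial c

/-!
Seki–Yamamoto's connected sums. With the connector `c(m, n) = m! n! / (m + n)!` and
`ζ_m(k)` the part of the series for `ζ(k)` whose leading variable is `m`, put
`Z(k; l) = ∑_{m, n} c(m, n) ζ_m(k) ζ_n(l)`, so that `Z(k; ∅) = ζ(k)` and `Z(∅; l) = ζ(l)`.
The telescoping identity `∑_{b > n} c(m, b) / b = c(m, n) / m` gives the transport relation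
`Z((k₁ + 1, k₂, …); l) = Z((k₁, k₂, …); (1, l))`, and together with `Z(k; l) = Z(l; k)` it
moves `s` across one unit at a time until the left side is empty; the right side is then
`τ(s)`, read off from the partial sums. All sums live in `ℝ≥0∞`, where rearranging is free.
-/

open Filter Topology
open scoped ENNReal

theorem ENNReal.tsum_eq_of_eq_add_of_tendsto_zero {f g : ℕ → ℝ≥0∞}
    (hfg : ∀ n, g n = f n + g (n + 1)) (hg : Tendsto g atTop (𝓝 0)) : ∑' n, f n = g 0 := by
  have partial_sums : ∀ N, ∑ n ∈ Finset.range N, f n + g N = g 0 := by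
    intro N
    induction N with
    | zero => simp
    | succ N ih => rw [Finset.sum_range_succ, add_assoc, ← hfg, ih]
  have hlim := (ENNReal.tendsto_nat_tsum f).add hg
  rw [add_zero] at hlim
  exact tendsto_nhds_unique hlim (by simp [partial_sums])

theorem ENNReal.tsum_pi_fin_succ {α : Type*} {l : ℕ} (f : (Fin (l + 1) → α) → ℝ≥0∞) :
    ∑' n, f n = ∑' (a : α) (v : Fin l → α), f (Fin.cons a v) := by
  rw [← (Fin.consEquiv fun _ => α).tsum_eq f]
  exact ENNReal.tsum_prod (f := fun a v => f (Fin.cons a v))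

theorem Fin.strictAnti_cons_iff {α : Type*} [Preorder α] {l : ℕ} {a : α} {v : Fin l → α} :
    StrictAnti (Fin.cons a v : Fin (l + 1) → α) ↔ (∀ i, v i < a) ∧ StrictAnti v := by
  simp [StrictAnti, Fin.forall_fin_succ, Fin.succ_pos]

theorem partialSums_cons (a : ℕ) (t : List ℕ) :
    partialSums (a :: t) = a :: (partialSums t).map (a + ·) := by
  simp [partialSums, List.range_succ_eq_map, Function.comp_def, List.take_succ_cons]

theorem unPartial_partialSums (l : List ℕ) : unPartial (partialSums l) = l := by
  induction l with
  | nil => rfl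
  | cons a t ih =>
    rw [partialSums_cons, unPartial, List.zipWith_cons_cons, Nat.sub_zero,
      show a :: (partialSums t).map (a + ·) = (0 :: partialSums t).map (a + ·) by simp,
      List.zipWith_map]
    simpa [unPartial, Nat.add_sub_add_left] using ih

theorem one_le_of_mem_partialSums {t : List ℕ} (ht : ∀ a ∈ t, 1 ≤ a) {x : ℕ}
    (hx : x ∈ partialSums t) : 1 ≤ x := by
  induction t generalizing x with
  | nil => simp [partialSums] at hx
  | cons a t ih =>
    rw [partialSums_cons] at hx
    have ha := ht a (by simp)
    rcases List.mem_cons.mp hx with rfl | hx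
    · exact ha
    · obtain ⟨y, -, rfl⟩ := List.mem_map.mp hx
      omega

namespace MultipleZeta

noncomputable section

/-- `m! n! / (m + n)!` -/
def connector (m n : ℕ) : ℝ≥0∞ := ((m + n).choose m : ℝ≥0∞)⁻¹

theorem connector_zero_left (n : ℕ) : connector 0 n = 1 := by simp [connector]

theorem connector_comm (m n : ℕ) : connector m n = connector n m := by
  rw [connector, connector, Nat.choose_symm_add, add_comm]

theorem connector_ne_top (m n : ℕ) : connector m n ≠ ∞ := by
  simp [connector, (Nat.choose_pos (Nat.le_add_right m n)).ne']

theorem connector_le_inv (m n : ℕ) (hm : 1 ≤ m) : connector m n ≤ (n : ℝ≥0∞)⁻¹ := by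
  refine ENNReal.inv_le_inv.mpr (Nat.cast_le.mpr ?_)
  calc n ≤ (n + 1).choose n := by simp
    _ ≤ (m + n).choose n := Nat.choose_le_choose n (by omega)
    _ = (m + n).choose m := Nat.choose_symm_add.symm

theorem tendsto_connector_atTop (m : ℕ) (hm : 1 ≤ m) : Tendsto (connector m) atTop (𝓝 0) :=
  tendsto_of_tendsto_of_tendsto_of_le_of_le tendsto_const_nhds
    ENNReal.tendsto_inv_nat_nhds_zero (fun _ => zero_le) (fun n => connector_le_inv m n hm)

theorem connector_mul_inv_eq (m n : ℕ) (hm : 1 ≤ m) :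
    connector m n * (m : ℝ≥0∞)⁻¹ =
      connector m (n + 1) * ((n + 1 : ℕ) : ℝ≥0∞)⁻¹ + connector m (n + 1) * (m : ℝ≥0∞)⁻¹ := by
  have hchoose : (n + 1) * (m + n + 1).choose m = (m + n + 1) * (m + n).choose m := by
    rw [Nat.choose_symm_add, Nat.add_one_mul_choose_eq, mul_comm,
      Nat.choose_symm_of_eq_add (show m + n + 1 = n + 1 + m by omega)]
  have hm_inv : (m : ℝ≥0∞)⁻¹ ≠ ∞ := by simp; omega
  have hc₀ := connector_ne_top m n
  have hc₁ := connector_ne_top m (n + 1)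
  rw [← ENNReal.toReal_eq_toReal_iff' (by finiteness) (by finiteness),
    ENNReal.toReal_add (by finiteness) (by finiteness)]
  simp only [connector, ENNReal.toReal_mul, ENNReal.toReal_inv, ENNReal.toReal_natCast]
  have hchoose₀ := Nat.choose_pos (Nat.le_add_right m n)
  have hchoose₁ := Nat.choose_pos (Nat.le_add_right m (n + 1))
  field_simp
  rw [← add_assoc, mul_comm, mul_comm ((m + n).choose m : ℝ)]
  exact_mod_cast hchoose

theorem tsum_connector_mul_inv (m n : ℕ) (hm : 1 ≤ m) :
    ∑' b, (if n < b then connector m b * (b : ℝ≥0∞)⁻¹ else 0) = connector m n * (m : ℝ≥0∞)⁻¹ := by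
  have shift : Function.Injective (· + (n + 1)) := add_left_injective _
  rw [← shift.tsum_eq]
  · simp only [show ∀ i, n < i + (n + 1) from fun i => by omega, if_true]
    refine (ENNReal.tsum_eq_of_eq_add_of_tendsto_zero
      (g := fun i => connector m (i + n) * (m : ℝ≥0∞)⁻¹) (fun i => ?_) ?_).trans (by rw [zero_add])
    · simpa [add_assoc, add_comm, add_left_comm] using connector_mul_inv_eq m (i + n) hm
    · have hm_inv : (m : ℝ≥0∞)⁻¹ ≠ ∞ := by simp; omega
      simpa using ENNReal.Tendsto.mul_const
        ((tendsto_connector_atTop m hm).comp (tendsto_add_atTop_nat n)) (Or.inr hm_inv)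
  · intro b hb
    have hnb : n < b := by
      by_contra h
      simp [h] at hb
    exact ⟨b - (n + 1), by simp only; omega⟩

/-- `zetaAt k n` is the sum over `n = n₁ > n₂ > ⋯ > n_l ≥ 1` of `∏ nᵢ^{-kᵢ}`; the empty index
is given the single leading variable `0`. -/
def zetaAt : List ℕ → ℕ → ℝ≥0∞
  | [], n => if n = 0 then 1 else 0
  | k :: t, n => (n : ℝ≥0∞)⁻¹ ^ k * ∑' b, if b < n then zetaAt t b else 0

theorem zetaAt_cons (k : ℕ) (t : List ℕ) (n : ℕ) :
    zetaAt (k :: t) n = (n : ℝ≥0∞)⁻¹ ^ k * ∑' b, if b < n then zetaAt t b else 0 := rfl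

theorem zetaAt_succ_cons (k : ℕ) (t : List ℕ) (m : ℕ) :
    zetaAt ((k + 1) :: t) m = zetaAt (k :: t) m * (m : ℝ≥0∞)⁻¹ := by
  simp only [zetaAt, pow_succ]
  ring

def zeta (k : List ℕ) : ℝ≥0∞ := ∑' n, zetaAt k n

def IsChainBelow {l : ℕ} (M : ℕ∞) (n : Fin l → ℕ) : Prop :=
  (StrictAnti n ∧ ∀ i, 1 ≤ n i) ∧ ∀ i, (n i : ℕ∞) < M

theorem isChainBelow_cons_iff {l : ℕ} {M : ℕ∞} {m : ℕ} (hm : 1 ≤ m) {v : Fin l → ℕ} :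
    IsChainBelow M (Fin.cons m v : Fin (l + 1) → ℕ) ↔ (m : ℕ∞) < M ∧ IsChainBelow m v := by
  simp only [IsChainBelow, Fin.strictAnti_cons_iff, Fin.forall_fin_succ, Fin.cons_zero,
    Fin.cons_succ, Nat.cast_lt]
  constructor
  · rintro ⟨⟨⟨hvm, hv⟩, -, hpos⟩, hmM, -⟩
    exact ⟨hmM, ⟨hv, hpos⟩, hvm⟩
  · rintro ⟨hmM, ⟨hv, hpos⟩, hvm⟩
    exact ⟨⟨⟨hvm, hv⟩, hm, hpos⟩, hmM, fun i => lt_trans (by exact_mod_cast hvm i) hmM⟩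

open Classical in
def boundedTupleSum (k : List ℕ) (M : ℕ∞) : ℝ≥0∞ :=
  ∑' n : Fin k.length → ℕ, if IsChainBelow M n then ∏ i, (n i : ℝ≥0∞)⁻¹ ^ k.get i else 0

theorem boundedTupleSum_eq_tsum_zetaAt (k : List ℕ) (M : ℕ∞) (hM : M ≠ 0) :
    boundedTupleSum k M = ∑' n : ℕ, if (n : ℕ∞) < M then zetaAt k n else 0 := by
  classical
  induction k generalizing M with
  | nil =>
    rw [tsum_eq_single 0 fun n hn => by simp [zetaAt, hn]]
    simp [boundedTupleSum, IsChainBelow, zetaAt, pos_iff_ne_zero.mpr hM, StrictAnti]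
  | cons a t ih =>
    rw [boundedTupleSum]
    simp only [List.length_cons]
    rw [ENNReal.tsum_pi_fin_succ]
    refine tsum_congr fun m => ?_
    rcases Nat.eq_zero_or_pos m with rfl | hm
    · simp [zetaAt, IsChainBelow, Fin.forall_fin_succ]
    have hprod : ∀ v : Fin t.length → ℕ,
        ∏ i, ((Fin.cons m v : Fin (t.length + 1) → ℕ) i : ℝ≥0∞)⁻¹ ^ (a :: t).get i =
          (m : ℝ≥0∞)⁻¹ ^ a * ∏ i, (v i : ℝ≥0∞)⁻¹ ^ t.get i := by
      simp [Fin.prod_univ_succ]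
    simp only [isChainBelow_cons_iff hm, hprod]
    by_cases hmM : (m : ℕ∞) < M
    · have ih_m := ih m (by exact_mod_cast hm.ne')
      simp only [Nat.cast_lt] at ih_m
      simp only [hmM, true_and, if_true]
      rw [zetaAt, ← ih_m, boundedTupleSum, ← ENNReal.tsum_mul_left]
      simp_rw [mul_ite, mul_zero]
    · simp [hmM]

theorem mzv_eq_toReal_zeta (k : List ℕ) : mzv k = (zeta k).toReal := by
  have hzeta : zeta k = boundedTupleSum k ⊤ := by
    simp [zeta, boundedTupleSum_eq_tsum_zetaAt k ⊤ (by simp)]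
  have hchain : ∀ n : Fin k.length → ℕ,
      IsChainBelow ⊤ n ↔ (∀ i j, i < j → n j < n i) ∧ ∀ i, 1 ≤ n i := by
    simp [IsChainBelow, StrictAnti]
  rw [hzeta, boundedTupleSum, ENNReal.tsum_toReal_eq, mzv]
  · refine tsum_congr fun n => ?_
    by_cases h : (∀ i j, i < j → n j < n i) ∧ ∀ i, 1 ≤ n i
    · rw [if_pos h, if_pos ((hchain n).mpr h)]
      simp [ENNReal.toReal_prod, inv_pow]
    · rw [if_neg h, if_neg (mt (hchain n).mp h), ENNReal.toReal_zero]
  · intro n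
    split_ifs with h
    · exact ENNReal.prod_ne_top fun i _ => ENNReal.pow_ne_top (ENNReal.inv_ne_top.mpr
        (by simpa using Nat.one_le_iff_ne_zero.mp (h.1.2 i)))
    · simp

def connectedSum (k l : List ℕ) : ℝ≥0∞ :=
  ∑' (m : ℕ) (n : ℕ), connector m n * zetaAt k m * zetaAt l n

theorem connectedSum_nil_left (l : List ℕ) : connectedSum [] l = zeta l := by
  rw [connectedSum, tsum_eq_single 0 fun m hm => by simp [zetaAt, hm]]
  simp [zetaAt, connector_zero_left, zeta]

theorem connectedSum_comm (k l : List ℕ) : connectedSum k l = connectedSum l k := by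
  rw [connectedSum, connectedSum, ENNReal.tsum_comm]
  refine tsum_congr fun n => tsum_congr fun m => ?_
  rw [connector_comm]
  ring

theorem connectedSum_succ_cons (k : ℕ) (kt l : List ℕ) :
    connectedSum ((k + 1) :: kt) l = connectedSum (k :: kt) (1 :: l) := by
  rw [connectedSum, connectedSum]
  refine tsum_congr fun m => ?_
  rcases Nat.eq_zero_or_pos m with rfl | hm
  · simp [zetaAt]
  calc ∑' n, connector m n * zetaAt ((k + 1) :: kt) m * zetaAt l n
      = ∑' n, (∑' b, if n < b then connector m b * (b : ℝ≥0∞)⁻¹ else 0) *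
          (zetaAt (k :: kt) m * zetaAt l n) := by
        refine tsum_congr fun n => ?_
        rw [tsum_connector_mul_inv m n hm, zetaAt_succ_cons]
        ring
    _ = ∑' b, ∑' n, (if n < b then connector m b * (b : ℝ≥0∞)⁻¹ else 0) *
          (zetaAt (k :: kt) m * zetaAt l n) := by
        simp_rw [← ENNReal.tsum_mul_right]
        exact ENNReal.tsum_comm
    _ = ∑' b, connector m b * zetaAt (k :: kt) m * zetaAt (1 :: l) b := by
        refine tsum_congr fun b => ?_
        rw [zetaAt_cons 1 l b, pow_one, ← ENNReal.tsum_mul_left, ← ENNReal.tsum_mul_left]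
        refine tsum_congr fun n => ?_
        split_ifs <;> ring

/-- The index left on the right after moving `k` across, one unit at a time. The second and
third clauses are junk: they are not reached when the entries of `k` are positive and
`2 ≤ k.headI ∨ l ≠ []`. -/
def transport : List ℕ → List ℕ → List ℕ
  | [], l => l
  | 0 :: _, _ => []
  | 1 :: _, [] => []
  | 1 :: kt, c :: lt => transport kt ((c + 1) :: lt)
  | (k + 2) :: kt, l => transport ((k + 1) :: kt) (1 :: l)
  termination_by k => k.sum

theorem connectedSum_eq_zeta_transport (k l : List ℕ) (hk : ∀ a ∈ k, 1 ≤ a)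
    (h : 2 ≤ k.headI ∨ l ≠ []) : connectedSum k l = zeta (transport k l) := by
  induction k, l using transport.induct with
  | case1 l => rw [transport, connectedSum_nil_left]
  | case2 kt l => simp at hk
  | case3 kt => simp at h
  | case4 kt c lt ih =>
    rw [transport, connectedSum_comm, ← connectedSum_succ_cons, connectedSum_comm]
    exact ih (fun a ha => hk a (List.mem_cons_of_mem _ ha)) (Or.inr (List.cons_ne_nil _ _))
  | case5 k kt l ih =>
    rw [transport, connectedSum_succ_cons]
    refine ih (fun a ha => ?_) (Or.inr (List.cons_ne_nil _ _))
    rcases List.mem_cons.mp ha with rfl | ha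
    · omega
    · exact hk a (List.mem_cons_of_mem _ ha)

def reflectedPartialSums (k : List ℕ) : List ℕ :=
  (partialSums k).reverse.map fun a => k.sum + 1 - a

def dualPartialSums (k : List ℕ) : List ℕ :=
  ((List.range k.sum).map (· + 1)).filter fun m => m ∉ reflectedPartialSums k

theorem dualSeq_eq_unPartial (k : List ℕ) : dualSeq k = unPartial (dualPartialSums k) := rfl

theorem le_of_mem_reflectedPartialSums {t : List ℕ} (ht : ∀ a ∈ t, 1 ≤ a) {x : ℕ}
    (hx : x ∈ reflectedPartialSums t) : x ≤ t.sum := by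
  obtain ⟨p, hp, rfl⟩ := List.mem_map.mp hx
  have := one_le_of_mem_partialSums ht (List.mem_reverse.mp hp)
  omega

theorem reflectedPartialSums_succ_cons (a : ℕ) (t : List ℕ) :
    reflectedPartialSums ((a + 1) :: t) = reflectedPartialSums t ++ [t.sum + 1] := by
  simp only [reflectedPartialSums, partialSums_cons, List.reverse_cons, List.map_append,
    List.map_reverse, List.map_map, List.sum_cons, List.map_cons, List.map_nil]
  congr 2
  · exact List.map_congr_left fun p _ => by simp only [Function.comp_apply]; omega
  · omega

theorem dualPartialSums_eq_filter (t : List ℕ) :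
    dualPartialSums t = (List.range' 1 t.sum).filter fun m => m ∉ reflectedPartialSums t := by
  simp only [dualPartialSums, List.range'_eq_map_range, add_comm 1]

theorem dualPartialSums_succ_cons (a : ℕ) {t : List ℕ} (ht : ∀ b ∈ t, 1 ≤ b) :
    dualPartialSums ((a + 1) :: t) = dualPartialSums t ++ List.range' (t.sum + 2) a := by
  have hsum : ((a + 1) :: t).sum = t.sum + 1 + a := by simp; omega
  rw [dualPartialSums_eq_filter, dualPartialSums_eq_filter, hsum, reflectedPartialSums_succ_cons,
    ← List.range'_append_1, List.range'_1_concat, List.filter_append, List.filter_append]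
  have below : ∀ x ∈ List.range' 1 t.sum,
      x ∉ reflectedPartialSums t ++ [t.sum + 1] ↔ x ∉ reflectedPartialSums t := fun x hx => by
    simp [List.mem_range'_1] at hx ⊢
    omega
  have above : ∀ x ∈ List.range' (1 + (t.sum + 1)) a,
      x ∉ reflectedPartialSums t ++ [t.sum + 1] := fun x hx hmem => by
    rw [List.mem_range'_1] at hx
    rcases List.mem_append.mp hmem with h | h
    · have := le_of_mem_reflectedPartialSums ht h
      omega
    · simp at h
      omega
  have boundary :
      [1 + t.sum].filter (fun m => m ∉ reflectedPartialSums t ++ [t.sum + 1]) = [] := by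
    simp [add_comm]
  rw [boundary, List.append_nil, List.filter_eq_self.mpr fun x hx => decide_eq_true (above x hx),
    List.filter_congr fun x hx => decide_eq_decide.mpr (below x hx)]
  congr 2
  omega

theorem transport_eq_unPartial (k l : List ℕ) (hk : ∀ a ∈ k, 1 ≤ a) (h : 2 ≤ k.headI ∨ l ≠ []) :
    transport k l = unPartial (dualPartialSums k ++ (partialSums l).map (k.sum + ·)) := by
  induction k, l using transport.induct with
  | case1 l => simp [transport, dualPartialSums, unPartial_partialSums]
  | case2 kt l => simp at hk
  | case3 kt => simp at h
  | case4 kt c lt ih =>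
    have hkt : ∀ a ∈ kt, 1 ≤ a := fun a ha => hk a (List.mem_cons_of_mem _ ha)
    rw [transport, ih hkt (Or.inr (List.cons_ne_nil _ _))]
    have hdual := dualPartialSums_succ_cons 0 hkt
    simp only [List.range'_zero, List.append_nil, zero_add] at hdual
    simp only [hdual, partialSums_cons, List.map_cons, List.map_map, List.sum_cons,
      Function.comp_def]
    congr 3 <;> first | omega | exact List.map_congr_left fun x _ => by omega
  | case5 a kt l ih =>
    have hkt : ∀ a ∈ kt, 1 ≤ a := fun a ha => hk a (List.mem_cons_of_mem _ ha)
    rw [transport, ih (by simpa using hkt) (Or.inr (List.cons_ne_nil _ _)),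
      dualPartialSums_succ_cons _ hkt, dualPartialSums_succ_cons _ hkt, List.range'_1_concat]
    simp only [partialSums_cons, List.map_cons, List.map_map, List.sum_cons, List.append_assoc,
      List.cons_append, List.nil_append, Nat.succ_eq_add_one, Function.comp_def]
    congr 4 <;> first | omega | exact List.map_congr_left fun x _ => by omega

end

end MultipleZeta

/-- **Duality of multiple zeta values.**  For every admissible sequence `s`,
`ζ(s) = ζ(τ(s))` where `τ(s)` is the dual sequence. -/
theorem mzv_duality (s : List ℕ)
    (hpos : ∀ a ∈ s, 1 ≤ a) (hadm : ∃ a t, s = a :: t ∧ 2 ≤ a) :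
    mzv s = mzv (dualSeq s) := by
  obtain ⟨a, t, rfl, ha⟩ := hadm
  have hhead : 2 ≤ (a :: t).headI ∨ ([] : List ℕ) ≠ [] := Or.inl ha
  open MultipleZeta in
  rw [mzv_eq_toReal_zeta, mzv_eq_toReal_zeta, ← connectedSum_nil_left (a :: t),
    connectedSum_comm, connectedSum_eq_zeta_transport _ _ hpos hhead,
    transport_eq_unPartial _ _ hpos hhead, dualSeq_eq_unPartial]
  simp [partialSums]
end

section
/- (Theorem 4.3.) For every word w of H, y ⧢ w − y * w = D̄(w) − D(w). -/
/-- `H = ℚ⟨x,y⟩`, modeled as the monoid algebra of the free monoid on two letters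
(`false` standing for `x` and `true` standing for `y`). -/
abbrev H : Type := MonoidAlgebra ℚ (FreeMonoid Bool)

/-- The word (monomial) of `H` corresponding to a list of letters. -/
noncomputable def wordAlg (w : List Bool) : H :=
  MonoidAlgebra.of ℚ (FreeMonoid Bool) (FreeMonoid.ofList w)

/-- The generator `x`. -/
noncomputable def X : H := wordAlg [false]
/-- The generator `y`. -/
noncomputable def Y : H := wordAlg [true]

/-- The word `x^{p-1} y` (i.e. `z_p`), as a list of letters. -/
def zW (p : ℕ) : List Bool := List.replicate (p - 1) false ++ [true]

/-!
Both sides vanish on the empty word and obey the same recursion in the first letter: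
for `Δ(w) = y ⧢ w - y * w` one finds `Δ(yw) = yΔ(w) - xyw` and `Δ(xw) = xΔ(w) + xyw`,
and since `D̄(aw) = aD̄(w) + τ(D(τa))w` with `τ(D(τy)) = 0`, `τ(D(τx)) = xy`, the same holds
for `D̄ - D`. The harmonic recursion for `y * xw` needs `w` to be split as `x^k` or `z_p w'`.
-/

lemma wordAlg_append (u v : List Bool) : wordAlg (u ++ v) = wordAlg u * wordAlg v := by
  simp [wordAlg]

lemma wordAlg_nil : wordAlg [] = 1 := rfl

lemma wordAlg_cons (a : Bool) (w : List Bool) :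
    wordAlg (a :: w) = wordAlg [a] * wordAlg w :=
  wordAlg_append [a] w

lemma wordAlg_cons_false (w : List Bool) : wordAlg (false :: w) = X * wordAlg w :=
  wordAlg_cons false w

lemma wordAlg_cons_true (w : List Bool) : wordAlg (true :: w) = Y * wordAlg w :=
  wordAlg_cons true w

lemma X_ne_zero : X ≠ 0 := by
  simp [X, wordAlg, MonoidAlgebra.of_apply]

lemma zW_one : zW 1 = [true] := rfl

lemma zW_succ {p : ℕ} (hp : 1 ≤ p) : zW (p + 1) = false :: zW p := by
  obtain ⟨q, rfl⟩ := Nat.exists_eq_add_of_le' hp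
  rfl

lemma List.eq_replicate_false_or_eq_zW_append (w : List Bool) :
    (∃ k, w = List.replicate k false) ∨ ∃ p w', 1 ≤ p ∧ w = zW p ++ w' := by
  induction w with
  | nil => exact Or.inl ⟨0, rfl⟩
  | cons a u ih =>
    cases a with
    | true => exact Or.inr ⟨1, u, le_rfl, rfl⟩
    | false =>
      rcases ih with ⟨k, rfl⟩ | ⟨p, w', hp, rfl⟩
      · exact Or.inl ⟨k + 1, rfl⟩
      · exact Or.inr ⟨p + 1, w', by omega, by rw [zW_succ hp]; rfl⟩

section AntiAutomorphism

variable {tau : H →ₗ[ℚ] H}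

lemma tau_one (tau_mul : ∀ u v : H, tau (u * v) = tau v * tau u) (tau_y : tau Y = X) :
    tau 1 = 1 := by
  have h : (tau 1 - 1) * X = 0 := by
    rw [sub_mul, one_mul, ← tau_y, ← tau_mul, mul_one, sub_self]
  exact sub_eq_zero.1 ((mul_eq_zero.1 h).resolve_right X_ne_zero)

lemma tau_wordAlg_singleton (tau_x : tau X = Y) (tau_y : tau Y = X) (a : Bool) :
    tau (wordAlg [a]) = wordAlg [!a] := by
  cases a
  exacts [tau_x, tau_y]

lemma tau_tau_wordAlg (tau_mul : ∀ u v : H, tau (u * v) = tau v * tau u)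
    (tau_x : tau X = Y) (tau_y : tau Y = X) (w : List Bool) :
    tau (tau (wordAlg w)) = wordAlg w := by
  induction w with
  | nil => rw [wordAlg_nil, tau_one tau_mul tau_y, tau_one tau_mul tau_y]
  | cons a u ih =>
    rw [wordAlg_cons, tau_mul, tau_mul, ih, tau_wordAlg_singleton tau_x tau_y,
      tau_wordAlg_singleton tau_x tau_y, Bool.not_not]

lemma tau_D_tau_wordAlg_cons {D : H →ₗ[ℚ] H}
    (tau_mul : ∀ u v : H, tau (u * v) = tau v * tau u) (tau_x : tau X = Y) (tau_y : tau Y = X)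
    (D_mul : ∀ u v : H, D (u * v) = D u * v + u * D v) (a : Bool) (w : List Bool) :
    tau (D (tau (wordAlg (a :: w)))) =
      wordAlg [a] * tau (D (tau (wordAlg w))) + tau (D (wordAlg [!a])) * wordAlg w := by
  rw [wordAlg_cons, tau_mul, tau_wordAlg_singleton tau_x tau_y, D_mul, map_add, tau_mul,
    tau_mul, tau_wordAlg_singleton tau_x tau_y, tau_tau_wordAlg tau_mul tau_x tau_y, Bool.not_not]

end AntiAutomorphism

lemma D_one {D : H →ₗ[ℚ] H} (D_mul : ∀ u v : H, D (u * v) = D u * v + u * D v) :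
    D 1 = 0 := by
  simpa using D_mul 1 1

lemma shuffle_Y_cons {sh : H →ₗ[ℚ] H →ₗ[ℚ] H}
    (sh_one_left : ∀ w : List Bool, sh 1 (wordAlg w) = wordAlg w)
    (sh_rec : ∀ (a b : Bool) (w₁ w₂ : List Bool),
      sh (wordAlg (a :: w₁)) (wordAlg (b :: w₂)) =
        wordAlg [a] * sh (wordAlg w₁) (wordAlg (b :: w₂)) +
          wordAlg [b] * sh (wordAlg (a :: w₁)) (wordAlg w₂))
    (a : Bool) (w : List Bool) :
    sh Y (wordAlg (a :: w)) = wordAlg [a] * sh Y (wordAlg w) + Y * wordAlg (a :: w) := by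
  have h := sh_rec true a [] w
  rw [wordAlg_nil, sh_one_left, add_comm] at h
  exact h

section Harmonic

variable {st : H →ₗ[ℚ] H →ₗ[ℚ] H}

lemma harmonic_replicate_false_right
    (st_one_right : ∀ w : List Bool, st (wordAlg w) 1 = wordAlg w)
    (st_x_right : ∀ (p : ℕ), 1 ≤ p → ∀ w : List Bool,
      st (wordAlg w) (wordAlg (List.replicate p false)) = wordAlg (w ++ List.replicate p false))
    (k : ℕ) (w : List Bool) :
    st (wordAlg w) (wordAlg (List.replicate k false)) = wordAlg (w ++ List.replicate k false) := by
  rcases k with _ | k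
  · simpa [wordAlg_nil] using st_one_right w
  · exact st_x_right (k + 1) k.succ_pos w

lemma harmonic_Y_zW_append
    (st_one_left : ∀ w : List Bool, st 1 (wordAlg w) = wordAlg w)
    (st_rec : ∀ (p q : ℕ), 1 ≤ p → 1 ≤ q → ∀ (w₁ w₂ : List Bool),
      st (wordAlg (zW p ++ w₁)) (wordAlg (zW q ++ w₂)) =
        wordAlg (zW p) * st (wordAlg w₁) (wordAlg (zW q ++ w₂)) +
          wordAlg (zW q) * st (wordAlg (zW p ++ w₁)) (wordAlg w₂) +
          wordAlg (zW (p + q)) * st (wordAlg w₁) (wordAlg w₂))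
    {p : ℕ} (hp : 1 ≤ p) (w : List Bool) :
    st Y (wordAlg (zW p ++ w)) =
      Y * wordAlg (zW p ++ w) + wordAlg (zW p) * st Y (wordAlg w) +
        wordAlg (zW (p + 1)) * wordAlg w := by
  have h := st_rec 1 p le_rfl hp [] w
  rwa [List.append_nil, zW_one, wordAlg_nil, st_one_left, st_one_left, Nat.add_comm 1 p] at h

lemma harmonic_Y_cons_true
    (st_one_left : ∀ w : List Bool, st 1 (wordAlg w) = wordAlg w)
    (st_rec : ∀ (p q : ℕ), 1 ≤ p → 1 ≤ q → ∀ (w₁ w₂ : List Bool),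
      st (wordAlg (zW p ++ w₁)) (wordAlg (zW q ++ w₂)) =
        wordAlg (zW p) * st (wordAlg w₁) (wordAlg (zW q ++ w₂)) +
          wordAlg (zW q) * st (wordAlg (zW p ++ w₁)) (wordAlg w₂) +
          wordAlg (zW (p + q)) * st (wordAlg w₁) (wordAlg w₂))
    (w : List Bool) :
    st Y (wordAlg (true :: w)) =
      Y * wordAlg (true :: w) + Y * st Y (wordAlg w) + X * wordAlg (true :: w) := by
  have h := harmonic_Y_zW_append st_one_left st_rec le_rfl w
  rw [zW_succ le_rfl, wordAlg_cons_false, mul_assoc, ← wordAlg_append] at h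
  exact h

lemma harmonic_Y_cons_false
    (st_one_left : ∀ w : List Bool, st 1 (wordAlg w) = wordAlg w)
    (st_one_right : ∀ w : List Bool, st (wordAlg w) 1 = wordAlg w)
    (st_x_right : ∀ (p : ℕ), 1 ≤ p → ∀ w : List Bool,
      st (wordAlg w) (wordAlg (List.replicate p false)) = wordAlg (w ++ List.replicate p false))
    (st_rec : ∀ (p q : ℕ), 1 ≤ p → 1 ≤ q → ∀ (w₁ w₂ : List Bool),
      st (wordAlg (zW p ++ w₁)) (wordAlg (zW q ++ w₂)) =
        wordAlg (zW p) * st (wordAlg w₁) (wordAlg (zW q ++ w₂)) +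
          wordAlg (zW q) * st (wordAlg (zW p ++ w₁)) (wordAlg w₂) +
          wordAlg (zW (p + q)) * st (wordAlg w₁) (wordAlg w₂))
    (w : List Bool) :
    st Y (wordAlg (false :: w)) =
      X * st Y (wordAlg w) + Y * wordAlg (false :: w) - X * wordAlg (true :: w) := by
  rcases w.eq_replicate_false_or_eq_zW_append with ⟨k, rfl⟩ | ⟨p, w, hp, rfl⟩
  · have h := harmonic_replicate_false_right st_one_right st_x_right
    rw [← List.replicate_succ, Y, h, h]
    simp only [List.singleton_append]
    rw [add_sub_cancel_left, ← wordAlg_cons]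
  · have h {q : ℕ} (hq : 1 ≤ q) := harmonic_Y_zW_append st_one_left st_rec hq
    rw [← List.cons_append, ← zW_succ hp, h (by omega), h hp, zW_succ (p := p + 1) (by omega),
      zW_succ hp]
    simp only [List.cons_append, wordAlg_cons_false, wordAlg_cons_true, wordAlg_append]
    noncomm_ring

end Harmonic

/-- **Theorem 4.3.**  Let `⧢` be the shuffle product, `*` the harmonic product,
`τ` the anti-automorphism of `H` exchanging `x` and `y`, and `D` the derivation with
`D(x) = 0`, `D(y) = xy`; set `D̄ = τ∘D∘τ`.  Then for every word `w` of `H`,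
`y ⧢ w - y * w = D̄(w) - D(w)`. -/
theorem shuffle_sub_harmonic_eq_Dbar_sub_D
    (sh : H →ₗ[ℚ] H →ₗ[ℚ] H)
    (sh_one : ∀ w : List Bool, sh 1 (wordAlg w) = wordAlg w ∧ sh (wordAlg w) 1 = wordAlg w)
    (sh_rec : ∀ (a b : Bool) (w₁ w₂ : List Bool),
      sh (wordAlg (a :: w₁)) (wordAlg (b :: w₂)) =
        wordAlg [a] * sh (wordAlg w₁) (wordAlg (b :: w₂)) +
          wordAlg [b] * sh (wordAlg (a :: w₁)) (wordAlg w₂))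
    (st : H →ₗ[ℚ] H →ₗ[ℚ] H)
    (st_one : ∀ w : List Bool, st 1 (wordAlg w) = wordAlg w ∧ st (wordAlg w) 1 = wordAlg w)
    (st_x : ∀ (p : ℕ), 1 ≤ p → ∀ w : List Bool,
      st (wordAlg (List.replicate p false)) (wordAlg w) =
          wordAlg (w ++ List.replicate p false) ∧
        st (wordAlg w) (wordAlg (List.replicate p false)) =
          wordAlg (w ++ List.replicate p false))
    (st_rec : ∀ (p q : ℕ), 1 ≤ p → 1 ≤ q → ∀ (w₁ w₂ : List Bool),
      st (wordAlg (zW p ++ w₁)) (wordAlg (zW q ++ w₂)) =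
        wordAlg (zW p) * st (wordAlg w₁) (wordAlg (zW q ++ w₂)) +
          wordAlg (zW q) * st (wordAlg (zW p ++ w₁)) (wordAlg w₂) +
          wordAlg (zW (p + q)) * st (wordAlg w₁) (wordAlg w₂))
    (tau : H →ₗ[ℚ] H) (tau_mul : ∀ u v : H, tau (u * v) = tau v * tau u)
    (tau_x : tau X = Y) (tau_y : tau Y = X)
    (D : H →ₗ[ℚ] H) (D_mul : ∀ u v : H, D (u * v) = D u * v + u * D v)
    (D_x : D X = 0) (D_y : D Y = X * Y) :
    ∀ w : List Bool,
      sh Y (wordAlg w) - st Y (wordAlg w) =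
        tau (D (tau (wordAlg w))) - D (wordAlg w) := by
  have st_one_left w := (st_one w).1
  have st_one_right w := (st_one w).2
  have st_x_right p hp w := (st_x p hp w).2
  intro w
  induction w with
  | nil =>
    rw [wordAlg_nil, tau_one tau_mul tau_y, D_one D_mul, map_zero, sub_self]
    exact sub_eq_zero.2 ((sh_one [true]).2.trans (st_one_right [true]).symm)
  | cons a u ih =>
    rw [tau_D_tau_wordAlg_cons tau_mul tau_x tau_y D_mul,
      shuffle_Y_cons (fun w ↦ (sh_one w).1) sh_rec, eq_add_of_sub_eq' ih.symm]
    cases a with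
    | false =>
      rw [harmonic_Y_cons_false st_one_left st_one_right st_x_right st_rec, Bool.not_false,
        ← Y, ← X, D_y, tau_mul, tau_x, tau_y, wordAlg_cons_false u, wordAlg_cons_true u, D_mul,
        D_x]
      noncomm_ring
    | true =>
      rw [harmonic_Y_cons_true st_one_left st_rec, Bool.not_true, ← X, ← Y, D_x,
        map_zero, wordAlg_cons_true u, D_mul, D_y]
      noncomm_ring
end
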